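/- Let X be a real random variable with logarithmic moment generating function Λ(t) = log E[exp(t X)] finite for all t ∈ ℝ, and suppose P(X > x) > 0 for some x ∈ ℝ. Then the Cramér rate function I(y) = sup_{t ∈ ℝ} (t y − Λ(t)) is finite at every point y of the interior of the interval [essinf X, esssup X]; in particular I(y) < ∞ for E[X] ≤ y < esssup X. -/

import Mathlib

open MeasureTheory ProbabilityTheory
open scoped ENNReal

/-- The Cramér rate function `I(y) = ⨆ t, (t y - Λ(t))`, as a function `ℝ → [0, ∞] ⊆ EReal`,
where `Λ = cgf X μ` is the logarithmic moment generating function `t ↦ log E[exp (t X)]`. -/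
noncomputable def cramerRate {Ω : Type*} [MeasurableSpace Ω] (X : Ω → ℝ) (μ : Measure Ω)
    (y : ℝ) : EReal :=
  ⨆ t : ℝ, ((t * y - cgf X μ t : ℝ) : EReal)

/-- If `y < essSup X` then the upper tail `{y ≤ X}` has positive probability. -/
lemma meas_ge_pos_of_lt_essSup {Ω : Type*} [MeasurableSpace Ω] (μ : Measure Ω)
    [IsProbabilityMeasure μ] (X : Ω → ℝ) (y : ℝ)
    (hy : (y : EReal) < essSup (fun ω => (X ω : EReal)) μ) :
    0 < μ {ω | y ≤ X ω} := by
  by_contra h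
  push_neg at h
  have h0 : μ {ω | y ≤ X ω} = 0 := le_antisymm h zero_le
  have hae : ∀ᵐ ω ∂μ, (X ω : EReal) ≤ (y : EReal) := by
    have : ∀ᵐ ω ∂μ, ¬ (y ≤ X ω) := by
      rw [MeasureTheory.ae_iff]
      simpa using h0
    filter_upwards [this] with ω hω
    exact_mod_cast le_of_not_ge hω
  exact absurd (essSup_le_of_ae_le (y : EReal) hae) (not_le.mpr hy)

/-- If `essInf X < y` then the lower tail `{X ≤ y}` has positive probability. -/
lemma meas_le_pos_of_essInf_lt {Ω : Type*} [MeasurableSpace Ω] (μ : Measure Ω)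
    [IsProbabilityMeasure μ] (X : Ω → ℝ) (y : ℝ)
    (hy : essInf (fun ω => (X ω : EReal)) μ < (y : EReal)) :
    0 < μ {ω | X ω ≤ y} := by
  by_contra h
  push_neg at h
  have h0 : μ {ω | X ω ≤ y} = 0 := le_antisymm h zero_le
  have hae : ∀ᵐ ω ∂μ, (y : EReal) ≤ (X ω : EReal) := by
    have : ∀ᵐ ω ∂μ, ¬ (X ω ≤ y) := by
      rw [MeasureTheory.ae_iff]
      simpa using h0
    filter_upwards [this] with ω hω
    exact_mod_cast le_of_not_ge hω
  exact absurd (le_essInf_of_ae_le (y : EReal) hae) (not_le.mpr hy)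

/-- Upper-tail bound: for `t ≥ 0`, `t y - cgf X μ t ≤ -log μ{y ≤ X}`. -/
lemma key_ge {Ω : Type*} [MeasurableSpace Ω] (μ : Measure Ω) [IsProbabilityMeasure μ]
    (X : Ω → ℝ) (y t : ℝ) (ht : 0 ≤ t)
    (h_int : Integrable (fun ω => Real.exp (t * X ω)) μ)
    (hq : 0 < (μ {ω | y ≤ X ω}).toReal) :
    t * y - cgf X μ t ≤ -Real.log (μ {ω | y ≤ X ω}).toReal := by
  have chern := measure_ge_le_exp_cgf (X := X) (μ := μ) y ht h_int
  have hlog : Real.log (μ {ω | y ≤ X ω}).toReal ≤ -t * y + cgf X μ t :=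
    (Real.log_le_iff_le_exp hq).mpr chern
  linarith

/-- Lower-tail bound: for `t ≤ 0`, `t y - cgf X μ t ≤ -log μ{X ≤ y}`. -/
lemma key_le {Ω : Type*} [MeasurableSpace Ω] (μ : Measure Ω) [IsProbabilityMeasure μ]
    (X : Ω → ℝ) (y t : ℝ) (ht : t ≤ 0)
    (h_int : Integrable (fun ω => Real.exp (t * X ω)) μ)
    (hq : 0 < (μ {ω | X ω ≤ y}).toReal) :
    t * y - cgf X μ t ≤ -Real.log (μ {ω | X ω ≤ y}).toReal := by
  have chern := measure_le_le_exp_cgf (X := X) (μ := μ) y ht h_int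
  have hlog : Real.log (μ {ω | X ω ≤ y}).toReal ≤ -t * y + cgf X μ t :=
    (Real.log_le_iff_le_exp hq).mpr chern
  linarith

/-- Jensen: `t * E[X] ≤ cgf X μ t`. -/
lemma mul_integral_le_cgf {Ω : Type*} [MeasurableSpace Ω] (μ : Measure Ω)
    [IsProbabilityMeasure μ] (X : Ω → ℝ) (t : ℝ) (hXint : Integrable X μ)
    (h_int : Integrable (fun ω => Real.exp (t * X ω)) μ) :
    t * (μ[X]) ≤ cgf X μ t := by
  have hJ : Real.exp (∫ ω, t * X ω ∂μ) ≤ ∫ ω, Real.exp (t * X ω) ∂μ := by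
    have := convexOn_exp.map_integral_le (μ := μ) (f := fun ω => t * X ω)
      Real.continuous_exp.continuousOn isClosed_univ
      (Filter.Eventually.of_forall fun _ => Set.mem_univ _) (hXint.const_mul t)
      (by exact h_int)
    simpa using this
  have hmgf : Real.exp (t * μ[X]) ≤ mgf X μ t := by
    rwa [MeasureTheory.integral_const_mul] at hJ
  have := Real.log_le_log (Real.exp_pos _) hmgf
  rwa [Real.log_exp] at this
  
/-- Let `X` be an integrable real random variable whose logarithmic moment generating function
`Λ(t) = log E[exp (t X)]` is finite for all `t : ℝ`, and suppose `P(X > x) > 0` for some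
`x : ℝ`. Then the Cramér rate function `I(y) = ⨆ t, (t y - Λ(t))` is finite at every point `y`
of the interior of the interval `[essinf X, esssup X]` (the essential infimum and supremum
being taken in `EReal`, so possibly `±∞`); in particular `I(y) < ∞` whenever
`E[X] ≤ y < esssup X`. -/
theorem cramerRate_lt_top_of_mem_interior {Ω : Type*} [MeasurableSpace Ω]
    (μ : Measure Ω) [IsProbabilityMeasure μ] (X : Ω → ℝ) (hX : Measurable X)
    (hXint : Integrable X μ)
    (hfin : ∀ t : ℝ, Integrable (fun ω => Real.exp (t * X ω)) μ)
    (hpos : ∃ x : ℝ, 0 < μ {ω | x < X ω}) :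
    (∀ y : ℝ, essInf (fun ω => (X ω : EReal)) μ < (y : EReal) →
        (y : EReal) < essSup (fun ω => (X ω : EReal)) μ → cramerRate X μ y < ⊤) ∧
      (∀ y : ℝ, μ[X] ≤ y → (y : EReal) < essSup (fun ω => (X ω : EReal)) μ →
        cramerRate X μ y < ⊤) := by
  constructor
  · intro y hlo hhi
    have hq : 0 < (μ {ω | y ≤ X ω}).toReal :=
      ENNReal.toReal_pos (meas_ge_pos_of_lt_essSup μ X y hhi).ne' (measure_ne_top μ _)
    have hr : 0 < (μ {ω | X ω ≤ y}).toReal :=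
      ENNReal.toReal_pos (meas_le_pos_of_essInf_lt μ X y hlo).ne' (measure_ne_top μ _)
    set C : ℝ := max (-Real.log (μ {ω | y ≤ X ω}).toReal)
      (-Real.log (μ {ω | X ω ≤ y}).toReal) with hC
    have hbound : cramerRate X μ y ≤ (C : EReal) := by
      refine iSup_le fun t => ?_
      rcases le_total 0 t with ht | ht
      · exact_mod_cast (key_ge μ X y t ht (hfin t) hq).trans (le_max_left _ _)
      · exact_mod_cast (key_le μ X y t ht (hfin t) hr).trans (le_max_right _ _)
    exact lt_of_le_of_lt hbound (EReal.coe_lt_top C)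
  · intro y hmean hhi
    have hq : 0 < (μ {ω | y ≤ X ω}).toReal :=
      ENNReal.toReal_pos (meas_ge_pos_of_lt_essSup μ X y hhi).ne' (measure_ne_top μ _)
    set C : ℝ := max (-Real.log (μ {ω | y ≤ X ω}).toReal) 0 with hC
    have hbound : cramerRate X μ y ≤ (C : EReal) := by
      refine iSup_le fun t => ?_
      rcases le_total 0 t with ht | ht
      · exact_mod_cast (key_ge μ X y t ht (hfin t) hq).trans (le_max_left _ _)
      · have hJ := mul_integral_le_cgf μ X t hXint (hfin t)
        have : t * y - cgf X μ t ≤ 0 := by nlinarith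
        exact_mod_cast this.trans (le_max_right _ _)
    exact lt_of_le_of_lt hbound (EReal.coe_lt_top C)
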